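/- In the quantum torus setting with extending unit z, set X̃_i = v^{t_i u_i} X_i z^{u_i}, L̃ = L − t∧u, and M̃(a) = v^{Σ_{i<j} a_i a_j L̃_{ji}} · X̃_1^{a_1} ⋯ X̃_r^{a_r}. Then for every integer vector a = (a_1,…,a_r), M̃(a) = v^{(a·t)(a·u)} · M(a) · z^{a·u}, where a·t = Σ_i a_i t_i and a·u = Σ_i a_i u_i; equivalently M̃(a) = v^{Σ_i Σ_j a_i a_j t_i u_j} M(a) z^{Σ_i a_i u_i}. -/

import Mathlib

/-!
Write `w` for `v` viewed as a central unit of `A`. Since `z ^ uᵢ` and `Xᵢ` commute up to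
`w ^ (2 tᵢ uᵢ)`, the power `X̃ᵢ ^ aᵢ` is the Weyl-ordered monomial
`w ^ (tᵢ uᵢ aᵢ²) Xᵢ ^ aᵢ z ^ (uᵢ aᵢ)`. Moving every power of `z` in `∏ X̃ᵢ ^ aᵢ` to the right,
past the factors `Xⱼ ^ aⱼ` with `j > i`, produces `w ^ (2 ∑_{i<j} uᵢ aᵢ tⱼ aⱼ)`; combined with the
twist `t ∧ u` in `L̃`, the collected exponent of `w` is `(a·t)(a·u)` plus the exponent of `M(a)`.
-/

theorem Fin.sum_sum_ite_lt_succ {M : Type*} [AddCommMonoid M] {n : ℕ}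
    (F : Fin (n + 1) → Fin (n + 1) → M) :
    ∑ i, ∑ j, (if i < j then F i j else 0)
      = ∑ j : Fin n, F 0 j.succ + ∑ i : Fin n, ∑ j : Fin n, if i < j then F i.succ j.succ else 0 := by
  simp [Fin.sum_univ_succ, Fin.succ_pos]

theorem Fin.sum_mul_sum_eq_sum_add_sum_ite_lt {R : Type*} [CommSemiring R] {n : ℕ}
    (f g : Fin n → R) :
    (∑ i, f i) * (∑ j, g j)
      = ∑ i, f i * g i + ∑ i, ∑ j, if i < j then f i * g j + f j * g i else 0 := by
  induction n with
  | zero => simp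
  | succ n ih =>
    rw [Fin.sum_sum_ite_lt_succ, Fin.sum_univ_succ f, Fin.sum_univ_succ g, Fin.sum_univ_succ,
      add_mul, mul_add, mul_add, ih, Finset.mul_sum, Finset.sum_mul, Finset.sum_add_distrib]
    ring

theorem rescaled_exchange_exponent {n : ℕ} (a t u : Fin n → ℤ) (L Lt : Matrix (Fin n) (Fin n) ℤ)
    (hLt : ∀ i j, Lt i j = L i j - (t i * u j - t j * u i)) :
    (∑ i, ∑ j, if i < j then a i * a j * Lt j i else 0)
        + (∑ i, t i * u i * (a i * a i)
          + ∑ i, ∑ j, if i < j then u i * a i * (2 * t j * a j) else 0)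
      = (∑ i, a i * t i) * (∑ i, a i * u i)
        + ∑ i, ∑ j, if i < j then a i * a j * L j i else 0 := by
  rw [Fin.sum_mul_sum_eq_sum_add_sum_ite_lt]
  have hdiag : ∑ i, t i * u i * (a i * a i) = ∑ i, a i * t i * (a i * u i) :=
    Finset.sum_congr rfl fun i _ => by ring
  have hoff : ∀ i j, (if i < j then a i * a j * Lt j i else 0)
        + (if i < j then u i * a i * (2 * t j * a j) else 0)
      = (if i < j then a i * t i * (a j * u j) + a j * t j * (a i * u i) else 0)
        + (if i < j then a i * a j * L j i else 0) := by
    intro i j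
    split_ifs
    · rw [hLt]; ring
    · simp
  have hoff_sum : (∑ i, ∑ j, if i < j then a i * a j * Lt j i else 0)
        + (∑ i, ∑ j, if i < j then u i * a i * (2 * t j * a j) else 0)
      = (∑ i, ∑ j, if i < j then a i * t i * (a j * u j) + a j * t j * (a i * u i) else 0)
        + (∑ i, ∑ j, if i < j then a i * a j * L j i else 0) := by
    simp only [← Finset.sum_add_distrib, hoff]
  linear_combination hdiag + hoff_sum

section Group

variable {G : Type*} [Group G]

theorem zpow_mul_eq_of_mul_eq {c x z : G} (hcx : Commute c x) (hcz : Commute c z)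
    (h : z * x = c * (x * z)) (m : ℤ) : z ^ m * x = c ^ m * (x * z ^ m) := by
  -- conjugation by `x⁻¹` is a homomorphism sending `z` to `c * z`
  have hconj : x⁻¹ * z * x⁻¹⁻¹ = c * z := by
    rw [inv_inv, mul_assoc, h, hcx.symm.inv_left.left_comm, inv_mul_cancel_left]
  have := conj_zpow (a := x⁻¹) (b := z) (i := m)
  rw [hconj, hcz.mul_zpow, inv_inv] at this
  rw [(hcx.zpow_left m).left_comm, this]
  group

theorem zpow_mul_zpow_eq_of_mul_eq {c x z : G} (hcx : Commute c x) (hcz : Commute c z)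
    (h : z * x = c * (x * z)) (m n : ℤ) : z ^ m * x ^ n = c ^ (m * n) * (x ^ n * z ^ m) := by
  have hconj : z ^ m * x * (z ^ m)⁻¹ = c ^ m * x := by
    rw [zpow_mul_eq_of_mul_eq hcx hcz h m, ← mul_assoc, mul_inv_cancel_right]
  have := conj_zpow (a := z ^ m) (b := x) (i := n)
  rw [hconj, (hcx.zpow_left m).mul_zpow, ← zpow_mul] at this
  rw [← mul_assoc, this]
  group

theorem mul_mul_zpow_eq_of_mul_eq_sq {d x y : G} (hdx : Commute d x) (hdy : Commute d y)
    (h : y * x = d ^ 2 * (x * y)) (n : ℤ) :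
    (d * x * y) ^ n = d ^ (n * n) * (x ^ n * y ^ n) := by
  have step : ∀ k : ℤ, d ^ (k * k) * (x ^ k * y ^ k) * (d * x * y)
      = d ^ ((k + 1) * (k + 1)) * (x ^ (k + 1) * y ^ (k + 1)) := by
    intro k
    have hyx : y ^ k * x = d ^ (2 * k) * (x * y ^ k) := by
      rw [zpow_mul_eq_of_mul_eq (hdx.pow_left 2) (hdy.pow_left 2) h k, ← zpow_natCast,
        ← zpow_mul]
      rfl
    calc d ^ (k * k) * (x ^ k * y ^ k) * (d * x * y)
        = d ^ (k * k) * (d * (x ^ k * y ^ k)) * (x * y) := by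
          rw [((hdx.zpow_right k).mul_right (hdy.zpow_right k)).eq]; group
      _ = d ^ (k * k) * d * x ^ k * (y ^ k * x) * y := by group
      _ = d ^ (k * k) * d * (x ^ k * d ^ (2 * k)) * (x * y ^ k * y) := by rw [hyx]; group
      _ = d ^ ((k + 1) * (k + 1)) * (x ^ (k + 1) * y ^ (k + 1)) := by
          rw [← (hdx.zpow_zpow (2 * k) k).eq]; group
  induction n using Int.induction_on with
  | zero => simp
  | succ k ih => rw [zpow_add_one, ih, step]
  | pred k ih => rw [zpow_sub_one, ih, mul_inv_eq_iff_eq_mul, step, sub_add_cancel]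

section Central

variable {w : G}

theorem mul_zpow_mul_of_central (hw : ∀ g, Commute w g) (k : ℤ) (g h : G) :
    g * (w ^ k * h) = w ^ k * (g * h) :=
  ((hw g).zpow_left k).symm.left_comm h

theorem mul_mul_zpow_zpow_eq_of_central (hw : ∀ g, Commute w g) {x z : G} {t : ℤ}
    (hzx : z * x = w ^ (2 * t) * (x * z)) (u n : ℤ) :
    (w ^ (t * u) * x * z ^ u) ^ n = w ^ (t * u * (n * n)) * x ^ n * z ^ (u * n) := by
  have hzux : z ^ u * x = (w ^ (t * u)) ^ 2 * (x * z ^ u) := by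
    rw [zpow_mul_eq_of_mul_eq ((hw _).zpow_left _) ((hw _).zpow_left _) hzx u, ← zpow_natCast,
      ← zpow_mul, ← zpow_mul]
    ring_nf
  rw [mul_mul_zpow_eq_of_mul_eq_sq ((hw _).zpow_left _) ((hw _).zpow_left _) hzux, ← zpow_mul,
    ← zpow_mul, mul_assoc (w ^ _), mul_assoc t]

theorem mul_prod_ofFn_eq_of_central (hw : ∀ g, Commute w g) {n : ℕ} {z : G} {y : Fin n → G}
    {s : Fin n → ℤ} (hzy : ∀ i, z * y i = w ^ s i * (y i * z)) :
    z * (List.ofFn y).prod = w ^ (∑ i, s i) * ((List.ofFn y).prod * z) := by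
  induction n with
  | zero => simp
  | succ n ih =>
    rw [List.ofFn_succ, List.prod_cons, Fin.sum_univ_succ, zpow_add, ← mul_assoc, hzy,
      mul_assoc, mul_assoc, ih (fun i => hzy i.succ), mul_zpow_mul_of_central hw]
    group

theorem prod_ofFn_zpow_mul_mul_zpow (hw : ∀ g, Commute w g) {n : ℕ} {z : G} {y : Fin n → G}
    {s : Fin n → ℤ} (hzy : ∀ i, z * y i = w ^ s i * (y i * z)) (e m : Fin n → ℤ) :
    (List.ofFn fun i => w ^ e i * y i * z ^ m i).prod
      = w ^ (∑ i, e i + ∑ i, ∑ j, if i < j then m i * s j else 0)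
        * ((List.ofFn y).prod * z ^ (∑ i, m i)) := by
  induction n with
  | zero => simp
  | succ n ih =>
    have hzY : z ^ m 0 * (List.ofFn fun i => y i.succ).prod
        = w ^ (m 0 * ∑ i : Fin n, s i.succ) * ((List.ofFn fun i => y i.succ).prod * z ^ m 0) := by
      rw [zpow_mul_eq_of_mul_eq ((hw _).zpow_left _) ((hw z).zpow_left _)
        (mul_prod_ofFn_eq_of_central hw (fun i => hzy i.succ)) (m 0), ← zpow_mul, mul_comm]
    rw [List.ofFn_succ, List.prod_cons, ih (fun i => hzy i.succ), Fin.sum_sum_ite_lt_succ,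
      Fin.sum_univ_succ, Fin.sum_univ_succ m, List.ofFn_succ, List.prod_cons, ← Finset.mul_sum,
      mul_zpow_mul_of_central hw, mul_assoc (w ^ e 0 * y 0), ← mul_assoc (z ^ m 0), hzY,
      mul_assoc (w ^ (m 0 * _)), mul_zpow_mul_of_central hw _ (w ^ e 0 * y 0)]
    group

-- `M(a)` with the central element `w` in the role of `v = q ^ (1/2)`
def exchangeMonomial {r : ℕ} (w : G) (L : Matrix (Fin r) (Fin r) ℤ) (X : Fin r → G)
    (a : Fin r → ℤ) : G :=
  w ^ (∑ i, ∑ j, if i < j then a i * a j * L j i else 0) * (List.ofFn fun i => X i ^ a i).prod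

theorem exchangeMonomial_rescale (hw : ∀ g, Commute w g) {r : ℕ} {X : Fin r → G} {z : G}
    {t u : Fin r → ℤ} (hzX : ∀ i, z * X i = w ^ (2 * t i) * (X i * z))
    {L Lt : Matrix (Fin r) (Fin r) ℤ} (hLt : ∀ i j, Lt i j = L i j - (t i * u j - t j * u i))
    (a : Fin r → ℤ) :
    exchangeMonomial w Lt (fun i => w ^ (t i * u i) * X i * z ^ u i) a
      = w ^ ((∑ i, a i * t i) * (∑ i, a i * u i))
        * (exchangeMonomial w L X a * z ^ (∑ i, a i * u i)) := by
  have hzXa : ∀ i, z * X i ^ a i = w ^ (2 * t i * a i) * (X i ^ a i * z) := fun i => by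
    simpa only [zpow_one, one_mul, ← zpow_mul] using
      zpow_mul_zpow_eq_of_mul_eq ((hw _).zpow_left _) ((hw _).zpow_left _) (hzX i) 1 (a i)
  simp only [exchangeMonomial, mul_mul_zpow_zpow_eq_of_central hw (hzX _)]
  rw [prod_ofFn_zpow_mul_mul_zpow hw hzXa, ← mul_assoc, ← zpow_add,
    rescaled_exchange_exponent a t u L Lt hLt, zpow_add]
  simp only [mul_comm (u _) (a _)]
  group

end Central

end Group

theorem Units.val_prod_map_finRange {M : Type*} [Monoid M] {n : ℕ} (f : Fin n → Mˣ) :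
    ((List.finRange n).map fun i => (f i : M)).prod = ((List.ofFn f).prod : M) := by
  have := map_list_prod (Units.coeHom M) (List.ofFn f)
  rw [List.ofFn_eq_map, List.map_map] at this
  rw [List.ofFn_eq_map]
  exact this.symm

theorem Units.commute_map_algebraMap {K A : Type*} [CommSemiring K] [Semiring A] [Algebra K A]
    (v : Kˣ) (g : Aˣ) : Commute (Units.map (algebraMap K A).toMonoidHom v) g :=
  Units.ext (Algebra.commutes (v : K) (g : A))

theorem rescaled_exchange_monomial_with_z_general (K : Type*) [Field K] (A : Type*) [Ring A]
    [Algebra K A] (v : K) (hv : v ≠ 0) (r : ℕ)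
    (L : Matrix (Fin r) (Fin r) ℤ)
    (X : Fin r → Aˣ)
    (t u : Fin r → ℤ) (z : Aˣ)
    (hz : ∀ i, (z : A) * (X i : A) = algebraMap K A ((v ^ 2) ^ t i) * ((X i : A) * (z : A)))
    (Xt : Fin r → Aˣ)
    (hXt : ∀ i, Xt i =
      Units.map (algebraMap K A).toMonoidHom (Units.mk0 v hv ^ (t i * u i)) * X i * z ^ u i)
    (Lt : Matrix (Fin r) (Fin r) ℤ)
    (hLt : ∀ i j, Lt i j = L i j - (t i * u j - t j * u i))
    (M Mt : (Fin r → ℤ) → A)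
    (hM : ∀ a, M a =
      algebraMap K A (v ^ (∑ i, ∑ j, if i < j then a i * a j * L j i else 0)) *
        ((List.finRange r).map (fun i => ((X i ^ a i : Aˣ) : A))).prod)
    (hMt : ∀ a, Mt a =
      algebraMap K A (v ^ (∑ i, ∑ j, if i < j then a i * a j * Lt j i else 0)) *
        ((List.finRange r).map (fun i => ((Xt i ^ a i : Aˣ) : A))).prod) :
    ∀ a : Fin r → ℤ, Mt a =
      algebraMap K A (v ^ ((∑ i, a i * t i) * (∑ i, a i * u i))) *
        (M a * ((z ^ (∑ i, a i * u i) : Aˣ) : A)) := by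
  intro a
  set w : Aˣ := Units.map (algebraMap K A).toMonoidHom (Units.mk0 v hv)
  have hw_val : ∀ k : ℤ, ((w ^ k : Aˣ) : A) = algebraMap K A (v ^ k) := fun k => by
    rw [← map_zpow, Units.coe_map, Units.val_zpow_eq_zpow_val, Units.val_mk0]; rfl
  have hval : ∀ (L : Matrix (Fin r) (Fin r) ℤ) (Y : Fin r → Aˣ),
      ((exchangeMonomial w L Y a : Aˣ) : A)
        = algebraMap K A (v ^ (∑ i, ∑ j, if i < j then a i * a j * L j i else 0))
          * ((List.finRange r).map fun i => ((Y i ^ a i : Aˣ) : A)).prod := fun L Y => by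
    rw [exchangeMonomial, Units.val_mul, hw_val, Units.val_prod_map_finRange]
  have hzX : ∀ i, z * X i = w ^ (2 * t i) * (X i * z) := fun i => Units.ext <| by
    rw [Units.val_mul, Units.val_mul, Units.val_mul, hw_val, zpow_mul, zpow_ofNat]
    exact hz i
  have hXt' : Xt = fun i => w ^ (t i * u i) * X i * z ^ u i := funext fun i => by
    rw [hXt, map_zpow]
  rw [hMt, hM, ← hval, ← hval, hXt',
    exchangeMonomial_rescale (Units.commute_map_algebraMap _) hzX hLt, Units.val_mul,
    Units.val_mul, hw_val]

/-- In the quantum torus setting with extending unit `z`, setting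
`X̃ i = v^(t i * u i) X i z^(u i)` and `L̃ = L - t∧u`, the rescaled exchange monomials
satisfy `M̃(a) = v^((a·t)(a·u)) M(a) z^(a·u)` for every integer vector `a`. -/
theorem rescaled_exchange_monomial_with_z (K : Type*) [Field K] (A : Type*) [Ring A]
    [Algebra K A] (v : K) (hv : v ≠ 0) (r : ℕ) (hr : 0 < r)
    (L : Matrix (Fin r) (Fin r) ℤ) (hL : L.transpose = -L)
    (X : Fin r → Aˣ)
    (hX : ∀ i j, (X i : A) * (X j : A) =
      algebraMap K A ((v ^ 2) ^ L i j) * ((X j : A) * (X i : A)))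
    (t u : Fin r → ℤ) (z : Aˣ)
    (hz : ∀ i, (z : A) * (X i : A) = algebraMap K A ((v ^ 2) ^ t i) * ((X i : A) * (z : A)))
    (Xt : Fin r → Aˣ)
    (hXt : ∀ i, Xt i =
      Units.map (algebraMap K A).toMonoidHom (Units.mk0 v hv ^ (t i * u i)) * X i * z ^ u i)
    (Lt : Matrix (Fin r) (Fin r) ℤ)
    (hLt : ∀ i j, Lt i j = L i j - (t i * u j - t j * u i))
    (M Mt : (Fin r → ℤ) → A)
    (hM : ∀ a, M a =
      algebraMap K A (v ^ (∑ i, ∑ j, if i < j then a i * a j * L j i else 0)) *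
        ((List.finRange r).map (fun i => ((X i ^ a i : Aˣ) : A))).prod)
    (hMt : ∀ a, Mt a =
      algebraMap K A (v ^ (∑ i, ∑ j, if i < j then a i * a j * Lt j i else 0)) *
        ((List.finRange r).map (fun i => ((Xt i ^ a i : Aˣ) : A))).prod) :
    ∀ a : Fin r → ℤ, Mt a =
      algebraMap K A (v ^ ((∑ i, a i * t i) * (∑ i, a i * u i))) *
        (M a * ((z ^ (∑ i, a i * u i) : Aˣ) : A)) :=
  rescaled_exchange_monomial_with_z_general K A v hv r L X t u z hz Xt hXt Lt hLt M Mt hM hMt
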